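/- Let x ∈ ℝ² with |x| < 1. Then ∫_{{y ∈ ℝ² : |y| < 1}} (1/(π|x−y|)) · (1/π)(1−|y|²)^{-1/2} dy = 1. That is, the function μ*(y) = (1/π)(1−|y|²)^{-1/2} on the open unit disk satisfies L[μ*] = 1 on the unit disk, where L[μ](x) = ∫ μ(y)/(π|x−y|) dy is the Riesz potential. -/

import Mathlib

/-!
Center polar coordinates at `x`, writing `y = x + r e^{iθ}`. The Jacobian `r` cancels the kernel
`1 / (π r)`, and `1 - |y|² = s² - (r + b)²` with `b = ⟨x, e^{iθ}⟩` and `s² = b² + 1 - |x|²`, so the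
radial integral is `∫_b^s du / √(s² - u²) = π/2 - arcsin (b / s)`. Since `b` changes sign under
`θ ↦ θ + π`, the arcsin term integrates to zero over a full turn, leaving `π⁻² · 2π · π/2 = 1`.
Everything is done with `lintegral`, so that Tonelli and the changes of variables need no
integrability side conditions.
-/

open MeasureTheory Set Real
open scoped ENNReal

noncomputable def rieszKernel {E : Type*} [SeminormedAddCommGroup E] (x y : E) : ℝ :=
  1 / (π * ‖x - y‖)

noncomputable def equilibriumDensity {E : Type*} [SeminormedAddCommGroup E] (y : E) : ℝ :=
  1 / (π * √(1 - ‖y‖ ^ 2))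

section RieszKernel

variable {E : Type*} [SeminormedAddCommGroup E]

lemma rieszKernel_nonneg (x y : E) : 0 ≤ rieszKernel x y := by
  unfold rieszKernel; positivity

lemma equilibriumDensity_nonneg (y : E) : 0 ≤ equilibriumDensity y := by
  unfold equilibriumDensity; positivity

-- Junk values (`√` of a negative number is `0`, and `1 / 0 = 0`) make the density vanish off the
-- open disk, so the integral over the disk is an integral over the whole space.
lemma equilibriumDensity_eq_zero_of_one_le_norm {y : E} (hy : 1 ≤ ‖y‖) :
    equilibriumDensity y = 0 := by
  rw [equilibriumDensity, sqrt_eq_zero'.2 (by nlinarith), mul_zero, div_zero]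

lemma measurable_rieszKernel_mul_equilibriumDensity [MeasurableSpace E] [OpensMeasurableSpace E]
    (x : E) : Measurable fun y => rieszKernel x y * equilibriumDensity y := by
  have hdist : Measurable fun y : E => ‖x - y‖ :=
    (continuous_const.sub continuous_id).norm.measurable
  have hsqrt : Measurable fun y : E => √(1 - ‖y‖ ^ 2) := by fun_prop
  exact (measurable_const.div (measurable_const.mul hdist)).mul
    (measurable_const.div (measurable_const.mul hsqrt))

end RieszKernel

lemma hasDerivAt_arcsin_div {s u : ℝ} (hs : 0 < s) (hu : |u| < s) :
    HasDerivAt (fun u => arcsin (u / s)) (1 / √(s ^ 2 - u ^ 2)) u := by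
  have hus : |u / s| < 1 := by rwa [abs_div, abs_of_pos hs, div_lt_one hs]
  rw [abs_lt] at hus
  refine ((hasDerivAt_arcsin hus.1.ne' hus.2.ne).comp u
    ((hasDerivAt_id u).div_const s)).congr_deriv ?_
  rw [show s ^ 2 - u ^ 2 = s ^ 2 * (1 - (u / s) ^ 2) by field_simp, sqrt_mul (sq_nonneg s),
    sqrt_sq hs.le]
  field_simp

lemma lintegral_Ioi_inv_sqrt_sq_sub_sq {a s : ℝ} (hs : 0 < s) (h₁ : -s ≤ a) (h₂ : a ≤ s) :
    ∫⁻ u in Ioi a, ENNReal.ofReal (1 / √(s ^ 2 - u ^ 2)) =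
      ENNReal.ofReal (π / 2 - arcsin (a / s)) := by
  have hcont : ContinuousOn (fun u => arcsin (u / s)) (Icc a s) := by fun_prop
  have hderiv : ∀ u ∈ Ioo a s, HasDerivAt (fun u => arcsin (u / s)) (1 / √(s ^ 2 - u ^ 2)) u :=
    fun u hu => hasDerivAt_arcsin_div hs (abs_lt.2 ⟨by linarith [hu.1], hu.2⟩)
  have hint := intervalIntegral.integrableOn_deriv_of_nonneg hcont hderiv fun u _ => by positivity
  have hvanish : ∀ u ∈ Ioi s, ENNReal.ofReal (1 / √(s ^ 2 - u ^ 2)) = 0 := fun u hu => by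
    rw [sqrt_eq_zero'.2 (by nlinarith [mem_Ioi.1 hu]), div_zero, ENNReal.ofReal_zero]
  calc ∫⁻ u in Ioi a, ENNReal.ofReal (1 / √(s ^ 2 - u ^ 2))
      = ∫⁻ u in Ioc a s, ENNReal.ofReal (1 / √(s ^ 2 - u ^ 2)) := by
        rw [← Ioc_union_Ioi_eq_Ioi h₂, lintegral_union measurableSet_Ioi Ioc_disjoint_Ioi_same,
          setLIntegral_congr_fun measurableSet_Ioi hvanish, lintegral_zero, add_zero]
    _ = ENNReal.ofReal (∫ u in a..s, 1 / √(s ^ 2 - u ^ 2)) := by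
        rw [intervalIntegral.integral_of_le h₂,
          ofReal_integral_eq_lintegral_ofReal hint (ae_of_all _ fun u => by positivity)]
    _ = ENNReal.ofReal (π / 2 - arcsin (a / s)) := by
        rw [intervalIntegral.integral_eq_sub_of_hasDerivAt_of_le h₂ hcont hderiv
          ((intervalIntegrable_iff_integrableOn_Ioc_of_le h₂).2 hint), div_self hs.ne', arcsin_one]

lemma lintegral_Ioi_inv_sqrt_sq_add_sub_sq (b : ℝ) {c : ℝ} (hc : 0 < c) :
    ∫⁻ r in Ioi 0, ENNReal.ofReal (1 / √(b ^ 2 + c - (r + b) ^ 2)) =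
      ENNReal.ofReal (π / 2 - arcsin (b / √(b ^ 2 + c))) := by
  have hbs : |b| < √(b ^ 2 + c) := by
    rw [← sqrt_sq_eq_abs]; exact sqrt_lt_sqrt (sq_nonneg b) (by linarith)
  set s := √(b ^ 2 + c) with hs_def
  have hs : 0 < s := by positivity
  rw [← sq_sqrt (by positivity : 0 ≤ b ^ 2 + c), ← hs_def,
    ← lintegral_Ioi_inv_sqrt_sq_sub_sq hs (abs_lt.1 hbs).1.le (abs_lt.1 hbs).2.le]
  have htranslate := (measurePreserving_add_right volume b).setLIntegral_comp_preimage_emb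
    (measurableEmbedding_addRight b) (fun u => ENNReal.ofReal (1 / √(s ^ 2 - u ^ 2))) (Ioi b)
  rwa [preimage_add_const_Ioi, sub_self] at htranslate

theorem Function.Antiperiodic.intervalIntegral_add_two_mul_eq_zero {E : Type*}
    [NormedAddCommGroup E] [NormedSpace ℝ E] {f : ℝ → E} {T : ℝ} (hf : Function.Antiperiodic f T)
    {t : ℝ} (hint : IntervalIntegrable f volume t (t + T)) :
    ∫ x in t..t + 2 * T, f x = 0 := by
  have hshift : ∫ x in t + T..t + 2 * T, f x = -∫ x in t..t + T, f x := by
    rw [show t + 2 * T = t + T + T by ring, ← intervalIntegral.integral_comp_add_right]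
    simp only [hf _, intervalIntegral.integral_neg]
  have hint' : IntervalIntegrable f volume (t + T) (t + 2 * T) := by
    have hneg : (-fun x => f (x + -T)) = f := funext fun x => by
      simpa [← sub_eq_add_neg] using (hf (x - T)).symm
    simpa [hneg, two_mul, add_assoc] using (hint.comp_add_right (-T)).neg
  rw [← intervalIntegral.integral_add_adjacent_intervals hint hint', hshift, add_neg_cancel]

lemma lintegral_Ioo_pi_div_two_sub_arcsin (p q : ℝ) {c : ℝ} (hc : 0 < c) :
    ∫⁻ θ in Ioo (-π) π, ENNReal.ofReal
        (π / 2 - arcsin ((p * cos θ + q * sin θ) / √((p * cos θ + q * sin θ) ^ 2 + c))) =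
      ENNReal.ofReal (π ^ 2) := by
  set A : ℝ → ℝ :=
    fun θ => arcsin ((p * cos θ + q * sin θ) / √((p * cos θ + q * sin θ) ^ 2 + c))
  have hanti : Function.Antiperiodic A π := fun θ => by
    simp only [A, cos_antiperiodic θ, sin_antiperiodic θ, mul_neg, ← neg_add, neg_sq, neg_div,
      arcsin_neg]
  have hcont : Continuous A :=
    continuous_arcsin.comp <| (by fun_prop : Continuous _).div (by fun_prop) fun θ => by positivity
  have hodd : ∫ θ in -π..π, A θ = 0 := by
    simpa [show -π + 2 * π = π by ring] using
      hanti.intervalIntegral_add_two_mul_eq_zero (hcont.intervalIntegrable (-π) (-π + π))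
  calc ∫⁻ θ in Ioo (-π) π, ENNReal.ofReal (π / 2 - A θ)
      = ∫⁻ θ in Ioc (-π) π, ENNReal.ofReal (π / 2 - A θ) := setLIntegral_congr Ioo_ae_eq_Ioc
    _ = ENNReal.ofReal (∫ θ in -π..π, (π / 2 - A θ)) := by
        rw [intervalIntegral.integral_of_le (by linarith [pi_pos])]
        exact (ofReal_integral_eq_lintegral_ofReal
          ((continuous_const.sub hcont).integrableOn_Icc.mono_set Ioc_subset_Icc_self)
          (ae_of_all _ fun θ => sub_nonneg.2 (arcsin_le_pi_div_two _))).symm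
    _ = ENNReal.ofReal (π ^ 2) := by
        rw [intervalIntegral.integral_sub intervalIntegrable_const (hcont.intervalIntegrable _ _),
          hodd, intervalIntegral.integral_const, smul_eq_mul]
        ring_nf

lemma norm_add_polarCoord_symm_sq (x : ℂ) (r θ : ℝ) :
    ‖x + Complex.polarCoord.symm (r, θ)‖ ^ 2 =
      ‖x‖ ^ 2 + 2 * r * (x.re * cos θ + x.im * sin θ) + r ^ 2 := by
  simp only [Complex.sq_norm, Complex.normSq_apply, Complex.polarCoord_symm_apply, Complex.add_re,
    Complex.add_im, Complex.mul_re, Complex.mul_im, Complex.ofReal_re, Complex.ofReal_im,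
    Complex.I_re, Complex.I_im]
  linear_combination r ^ 2 * sin_sq_add_cos_sq θ

lemma ofReal_mul_rieszKernel_mul_equilibriumDensity_polarCoord_symm (x : ℂ) {r : ℝ} (hr : 0 < r)
    (θ : ℝ) :
    ENNReal.ofReal r * ENNReal.ofReal (rieszKernel x (x + Complex.polarCoord.symm (r, θ)) *
        equilibriumDensity (x + Complex.polarCoord.symm (r, θ))) =
      ENNReal.ofReal (π ^ 2)⁻¹ * ENNReal.ofReal (1 / √((x.re * cos θ + x.im * sin θ) ^ 2 +
        (1 - ‖x‖ ^ 2) - (r + (x.re * cos θ + x.im * sin θ)) ^ 2)) := by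
  rw [← ENNReal.ofReal_mul hr.le, ← ENNReal.ofReal_mul (by positivity), rieszKernel,
    equilibriumDensity, sub_add_cancel_left, norm_neg, Complex.norm_polarCoord_symm,
    abs_of_pos hr, norm_add_polarCoord_symm_sq]
  congr 1
  rw [show (x.re * cos θ + x.im * sin θ) ^ 2 + (1 - ‖x‖ ^ 2) -
      (r + (x.re * cos θ + x.im * sin θ)) ^ 2 =
      1 - (‖x‖ ^ 2 + 2 * r * (x.re * cos θ + x.im * sin θ) + r ^ 2) by ring]
  field_simp

theorem lintegral_rieszKernel_mul_equilibriumDensity_complex {x : ℂ} (hx : ‖x‖ < 1) :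
    ∫⁻ z, ENNReal.ofReal (rieszKernel x z * equilibriumDensity z) = 1 := by
  have hc : 0 < 1 - ‖x‖ ^ 2 := by nlinarith [norm_nonneg x]
  set b : ℝ → ℝ := fun θ => x.re * cos θ + x.im * sin θ
  calc ∫⁻ z, ENNReal.ofReal (rieszKernel x z * equilibriumDensity z)
      = ∫⁻ w, ENNReal.ofReal (rieszKernel x (x + w) * equilibriumDensity (x + w)) :=
        (lintegral_add_left_eq_self _ x).symm
    _ = ∫⁻ p in Ioi 0 ×ˢ Ioo (-π) π, ENNReal.ofReal p.1 * ENNReal.ofReal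
          (rieszKernel x (x + Complex.polarCoord.symm p) *
            equilibriumDensity (x + Complex.polarCoord.symm p)) :=
        (Complex.lintegral_comp_polarCoord_symm _).symm
    _ = ∫⁻ p in Ioi 0 ×ˢ Ioo (-π) π, ENNReal.ofReal (π ^ 2)⁻¹ *
          ENNReal.ofReal (1 / √(b p.2 ^ 2 + (1 - ‖x‖ ^ 2) - (p.1 + b p.2) ^ 2)) :=
        setLIntegral_congr_fun (measurableSet_Ioi.prod measurableSet_Ioo) fun p hp =>
          ofReal_mul_rieszKernel_mul_equilibriumDensity_polarCoord_symm x hp.1 p.2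
    _ = ∫⁻ θ in Ioo (-π) π, ∫⁻ r in Ioi 0, ENNReal.ofReal (π ^ 2)⁻¹ *
          ENNReal.ofReal (1 / √(b θ ^ 2 + (1 - ‖x‖ ^ 2) - (r + b θ) ^ 2)) := by
        rw [Measure.volume_eq_prod, ← Measure.prod_restrict, lintegral_prod_symm]
        exact Measurable.aemeasurable (by fun_prop)
    _ = ENNReal.ofReal (π ^ 2)⁻¹ * ∫⁻ θ in Ioo (-π) π,
          ENNReal.ofReal (π / 2 - arcsin (b θ / √(b θ ^ 2 + (1 - ‖x‖ ^ 2)))) := by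
        rw [← lintegral_const_mul _ (by fun_prop)]
        refine lintegral_congr fun θ => ?_
        rw [lintegral_const_mul _ (by fun_prop), lintegral_Ioi_inv_sqrt_sq_add_sub_sq _ hc]
    _ = 1 := by
        rw [lintegral_Ioo_pi_div_two_sub_arcsin x.re x.im hc, ← ENNReal.ofReal_mul (by positivity),
          inv_mul_cancel₀ (by positivity), ENNReal.ofReal_one]

theorem integral_rieszKernel_mul_equilibriumDensity {E : Type*} [NormedAddCommGroup E]
    [InnerProductSpace ℝ E] [FiniteDimensional ℝ E] [MeasurableSpace E] [BorelSpace E]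
    (hE : Module.finrank ℝ E = 2) {x : E} (hx : ‖x‖ < 1) :
    ∫ y, rieszKernel x y * equilibriumDensity y = 1 := by
  let e : E ≃ₗᵢ[ℝ] ℂ := (stdOrthonormalBasis ℝ E).equiv Complex.orthonormalBasisOneI (finCongr hE)
  have hex : ‖e x‖ < 1 := by rwa [e.norm_map]
  calc ∫ y, rieszKernel x y * equilibriumDensity y
      = ∫ y, rieszKernel (e x) (e y) * equilibriumDensity (e y) := by
        simp only [rieszKernel, equilibriumDensity, ← map_sub, LinearIsometryEquiv.norm_map]
    _ = ∫ z, rieszKernel (e x) z * equilibriumDensity z :=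
        integral_comp e fun z => rieszKernel (e x) z * equilibriumDensity z
    _ = 1 := by
        rw [integral_eq_lintegral_of_nonneg_ae
            (ae_of_all _ fun z => mul_nonneg (rieszKernel_nonneg _ z) (equilibriumDensity_nonneg z))
            (measurable_rieszKernel_mul_equilibriumDensity _).aestronglyMeasurable,
          lintegral_rieszKernel_mul_equilibriumDensity_complex hex, ENNReal.toReal_one]

/-- The equilibrium density `μ*(y) = (1/π)(1−|y|²)^{-1/2}` of the unit disk `Λ ⊂ ℝ²`
satisfies `L[μ*](x) = ∫_Λ μ*(y)/(π|x−y|) dy = 1` for every `x` in the open unit disk,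
i.e. `μ* = L⁻¹[1]` for the Riesz potential `L`. -/
theorem stmt4 (x : EuclideanSpace ℝ (Fin 2)) (hx : ‖x‖ < 1) :
    ∫ y in Metric.ball (0 : EuclideanSpace ℝ (Fin 2)) 1,
      (1 / (Real.pi * ‖x - y‖)) * (1 / (Real.pi * Real.sqrt (1 - ‖y‖ ^ 2))) = 1 := by
  rw [setIntegral_eq_integral_of_forall_compl_eq_zero fun y hy => ?_]
  · exact integral_rieszKernel_mul_equilibriumDensity finrank_euclideanSpace_fin hx
  · rw [← equilibriumDensity, equilibriumDensity_eq_zero_of_one_le_norm (by simpa using hy),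
      mul_zero]
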